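/- The four-valued interpretation conforms to weak Kleene valuation: let V4 : P → {T1,F1}×{T2,F2} be a four-valued propositional model, let Val1 and Val2 be its two component valuations extended to all 3VL-formulas where Val1 behaves classically (Val1(¬A)=T1 iff Val1(A)=F1; Val1(A∧B)=T1 iff Val1(A)=T1 and Val1(B)=T1; Val1(A∨B)=T1 iff Val1(A)=T1 or Val1(B)=T1) and Val2 behaves False-infectiously (Val2(¬A)=F2 iff Val2(A)=F2; Val2(A∧B)=F2 iff Val2(A)=F2 or Val2(B)=F2; Val2(A∨B)=F2 iff Val2(A)=F2 or Val2(B)=F2), and let f_C be the compression function with f_C(T1,T2)=T, f_C(F1,T2)=F, f_C(T1,F2)=f_C(F1,F2)=U. Then for the three-valued model V defined by V(p)=f_C(V4(p)) and for every 3VL-formula A, f_C(Val1(A),Val2(A)) = Val^V_wK(A). -/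
import Mathlib


/-- The three truth values of three-valued logic. -/
inductive TV : Type
  | T : TV
  | U : TV
  | F : TV
deriving DecidableEq

open TV

/-- Weak Kleene negation. -/
def negTV : TV → TV
  | T => F
  | U => U
  | F => T

/-- Weak Kleene conjunction (`U` is infectious, otherwise classical). -/
def andTV : TV → TV → TV
  | U, _ => U
  | _, U => U
  | T, T => T
  | _, _ => F

/-- Weak Kleene disjunction (`U` is infectious, otherwise classical). -/
def orTV : TV → TV → TV
  | U, _ => U
  | _, U => U
  | F, F => F
  | _, _ => T

/-- Formulas of the propositional language 3VL. -/
inductive Form3 (P : Type) : Type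
  | atom : P → Form3 P
  | neg : Form3 P → Form3 P
  | conj : Form3 P → Form3 P → Form3 P
  | disj : Form3 P → Form3 P → Form3 P

/-- The weak Kleene valuation extending a three-valued model `V : P → TV`. -/
def wK {P : Type} (V : P → TV) : Form3 P → TV
  | .atom p => V p
  | .neg A => negTV (wK V A)
  | .conj A B => andTV (wK V A) (wK V B)
  | .disj A B => orTV (wK V A) (wK V B)

/-- Compression function: `f_C(T1,T2)=T`, `f_C(F1,T2)=F`,
`f_C(T1,F2)=f_C(F1,F2)=U`, where `true` codes `T1`/`T2` and `false` codes `F1`/`F2`. -/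
def fC : Bool → Bool → TV
  | _, false => TV.U
  | true, true => TV.T
  | false, true => TV.F

/-- The four-valued interpretation conforms to weak Kleene valuation:
if `Val1` extends the first component of `V4` classically and `Val2` extends
the second component False-infectiously, then compressing the pair of
two-valued values of any formula yields exactly its weak Kleene value in the
compressed three-valued model. -/
theorem fourValued_conforms_to_wK (P : Type) [Countable P] [Nonempty P]
    (V4 : P → Bool × Bool) (Val1 Val2 : Form3 P → Bool)
    (h1atom : ∀ p : P, Val1 (.atom p) = (V4 p).1)
    (h1neg : ∀ A : Form3 P, (Val1 (.neg A) = true ↔ Val1 A = false))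
    (h1conj : ∀ A B : Form3 P,
      (Val1 (.conj A B) = true ↔ Val1 A = true ∧ Val1 B = true))
    (h1disj : ∀ A B : Form3 P,
      (Val1 (.disj A B) = true ↔ Val1 A = true ∨ Val1 B = true))
    (h2atom : ∀ p : P, Val2 (.atom p) = (V4 p).2)
    (h2neg : ∀ A : Form3 P, (Val2 (.neg A) = false ↔ Val2 A = false))
    (h2conj : ∀ A B : Form3 P,
      (Val2 (.conj A B) = false ↔ Val2 A = false ∨ Val2 B = false))
    (h2disj : ∀ A B : Form3 P,
      (Val2 (.disj A B) = false ↔ Val2 A = false ∨ Val2 B = false)) :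
    ∀ A : Form3 P, fC (Val1 A) (Val2 A) = wK (fun p : P => fC (V4 p).1 (V4 p).2) A := by
  intro A
  induction A with
  | atom p => simp [wK, h1atom, h2atom]
  | neg A ih =>
    have e1 := h1neg A
    have e2 := h2neg A
    rw [wK, ← ih]
    cases hx : Val1 A.neg <;> cases hy : Val2 A.neg <;>
    cases ha : Val1 A <;> cases hb : Val2 A <;>
      simp only [hx, hy, ha, hb] at e1 e2 ⊢ <;>
      revert e1 e2 <;> decide
  | conj A B ihA ihB =>
    have e1 := h1conj A B
    have e2 := h2conj A B
    rw [wK, ← ihA, ← ihB]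
    cases hx : Val1 (A.conj B) <;> cases hy : Val2 (A.conj B) <;>
    cases ha : Val1 A <;> cases hb : Val2 A <;>
    cases hc : Val1 B <;> cases hd : Val2 B <;>
      simp only [hx, hy, ha, hb, hc, hd] at e1 e2 ⊢ <;>
      revert e1 e2 <;> decide
  | disj A B ihA ihB =>
    have e1 := h1disj A B
    have e2 := h2disj A B
    rw [wK, ← ihA, ← ihB]
    cases hx : Val1 (A.disj B) <;> cases hy : Val2 (A.disj B) <;>
    cases ha : Val1 A <;> cases hb : Val2 A <;>
    cases hc : Val1 B <;> cases hd : Val2 B <;>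
      simp only [hx, hy, ha, hb, hc, hd] at e1 e2 ⊢ <;>
      revert e1 e2 <;> decide
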